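/- (Gauss–Bonnet for the f-function) Let G be a finite abstract simplicial complex with vertex set V(G). Then, as an identity of polynomials with rational coefficients, f_G(t) − 1 = Σ_{v ∈ V(G)} F_{S(v)}(t), where F_H(t) = ∫_0^t f_H(s) ds = t + Σ_{k≥0} f_k(H) t^{k+2}/(k+2) and S(v) denotes the unit sphere of the 0-dimensional simplex {v}. -/
import Mathlib


open Finset Polynomial

namespace SphereFormula

variable {V : Type} [DecidableEq V]

/-- A finite abstract simplicial complex: a finite collection of nonempty finite sets
that is closed under taking nonempty subsets. -/
def IsComplex (G : Finset (Finset V)) : Prop :=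
  ∀ x ∈ G, x.Nonempty ∧ ∀ y, y ⊆ x → y.Nonempty → y ∈ G

/-- `w x = (-1)^(dim x)` where `dim x = |x| - 1`. -/
def w (x : Finset V) : ℤ := (-1) ^ (x.card - 1)

/-- Euler characteristic of a finite set of simplices: `χ(A) = Σ_{x ∈ A} w x`. -/
def chi (A : Finset (Finset V)) : ℤ := ∑ x ∈ A, w x

/-- The star `U(x) = {y ∈ G : x ⊆ y}`. -/
def star (G : Finset (Finset V)) (x : Finset V) : Finset (Finset V) :=
  G.filter fun y => x ⊆ y

/-- The unit ball `B(x) = {z ∈ G : z ⊆ y for some y ∈ U(x)}` (closure of the star). -/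
def ball (G : Finset (Finset V)) (x : Finset V) : Finset (Finset V) :=
  G.filter fun z => ∃ y ∈ G, x ⊆ y ∧ z ⊆ y

/-- The unit sphere `S(x) = B(x) \ U(x)`. -/
def sphere (G : Finset (Finset V)) (x : Finset V) : Finset (Finset V) :=
  ball G x \ star G x

/-- The vertex set of `G`: those `v` with `{v} ∈ G`. -/
def verts (G : Finset (Finset V)) : Finset V :=
  (G.biUnion id).filter fun v => {v} ∈ G

/-- Contractibility, defined inductively: a single vertex complex is contractible, and `G`
is contractible if there is `x ∈ G` with both `S(x)` and `G \ U(x)` contractible. -/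
inductive Contractible : Finset (Finset V) → Prop where
  | point (v : V) : Contractible ({({v} : Finset V)} : Finset (Finset V))
  | step (G : Finset (Finset V)) (x : Finset V) (hx : x ∈ G)
      (hS : Contractible (sphere G x)) (hG : Contractible (G \ star G x)) :
      Contractible G

mutual
  /-- `G` is a `d`-manifold (`d ≥ 0`): every unit sphere `S(x)` is a `(d-1)`-sphere. -/
  inductive IsManifold : ℤ → Finset (Finset V) → Prop where
    | mk (d : ℤ) (G : Finset (Finset V)) (hd : 0 ≤ d)
        (h : ∀ x ∈ G, IsSphere (d - 1) (sphere G x)) : IsManifold d G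

  /-- `d`-spheres: the empty complex is the `(-1)`-sphere, and a `d`-sphere is a
  `d`-manifold `G` such that `G \ U(x)` is contractible for some `x ∈ G`. -/
  inductive IsSphere : ℤ → Finset (Finset V) → Prop where
    | empty : IsSphere (-1) (∅ : Finset (Finset V))
    | mk (d : ℤ) (G : Finset (Finset V)) (hm : IsManifold d G)
        (h : ∃ x ∈ G, Contractible (G \ star G x)) : IsSphere d G
end

/-- The f-function `f_G(t) = 1 + Σ_{k ≥ 0} f_k(G) t^(k+1) = 1 + Σ_{x ∈ G} t^|x|`. -/
noncomputable def fPoly (G : Finset (Finset V)) : Polynomial ℚ :=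
  1 + ∑ x ∈ G, Polynomial.X ^ x.card

/-- `F_H(t) = ∫_0^t f_H(s) ds = t + Σ_{k ≥ 0} f_k(H) t^(k+2)/(k+2)`. -/
noncomputable def FPoly (H : Finset (Finset V)) : Polynomial ℚ :=
  Polynomial.X +
    ∑ x ∈ H, Polynomial.C (((x.card : ℚ) + 1)⁻¹) * Polynomial.X ^ (x.card + 1)

/-- The join `G + H = G ∪ H ∪ {x ∪ y : x ∈ G, y ∈ H}`. -/
def joinC (G H : Finset (Finset V)) : Finset (Finset V) :=
  G ∪ H ∪ (G ×ˢ H).image fun p => p.1 ∪ p.2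

/-- The barycentric refinement: simplices are the nonempty chains in `(G, ⊆)`. -/
def bary (G : Finset (Finset V)) : Finset (Finset (Finset V)) :=
  G.powerset.filter fun c => c.Nonempty ∧ ∀ x ∈ c, ∀ y ∈ c, x ⊆ y ∨ y ⊆ x

/-- `f` is locally injective: distinct vertices of a common simplex have distinct values. -/
def LocallyInjective (G : Finset (Finset V)) (f : V → ℤ) : Prop :=
  ∀ x ∈ G, ∀ v ∈ x, ∀ u ∈ x, v ≠ u → f v ≠ f u


lemma mem_verts' {V : Type} [DecidableEq V] {G : Finset (Finset V)} {v : V} :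
    v ∈ verts G ↔ {v} ∈ G := by
  simp only [verts, mem_filter, mem_biUnion, id]
  exact ⟨fun h => h.2, fun h => ⟨⟨{v}, h, mem_singleton_self v⟩, h⟩⟩

lemma mem_sphere_singleton {V : Type} [DecidableEq V] {G : Finset (Finset V)}
    (hG : IsComplex G) {v : V} {y : Finset V} :
    y ∈ sphere G {v} ↔ y ∈ G ∧ v ∉ y ∧ insert v y ∈ G := by
  simp only [sphere, ball, star, mem_sdiff, mem_filter, not_and, singleton_subset_iff]
  constructor
  · rintro ⟨⟨hy, z, hz, hvz, hyz⟩, hns⟩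
    exact ⟨hy, fun hv => hns hy hv, (hG z hz).2 _ (insert_subset hvz hyz) (insert_nonempty _ _)⟩
  · rintro ⟨hy, hv, hins⟩
    exact ⟨⟨hy, insert v y, hins, mem_insert_self _ _, subset_insert _ _⟩, fun _ => hv⟩

/-- Gauss–Bonnet for the f-function:
`f_G(t) - 1 = Σ_{v ∈ V(G)} F_{S(v)}(t)` as polynomials over `ℚ`. -/
theorem gauss_bonnet_fPoly {V : Type} [DecidableEq V] (G : Finset (Finset V))
    (hG : IsComplex G) :
    fPoly G - 1 = ∑ v ∈ verts G, FPoly (sphere G {v}) := by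
  classical
  have hL : fPoly G - 1 = ∑ x ∈ G, (X : Polynomial ℚ) ^ x.card := by
    rw [fPoly]; ring
  rw [hL]
  simp only [FPoly]
  rw [Finset.sum_add_distrib]
  rw [← Finset.sum_filter_add_sum_filter_not G (fun x => x.card = 1)]
  congr 1
  · -- singletons
    have himg : G.filter (fun x => x.card = 1) = (verts G).image (fun v => ({v} : Finset V)) := by
      ext x
      simp only [mem_filter, mem_image, Finset.card_eq_one]
      constructor
      · rintro ⟨hx, a, rfl⟩
        exact ⟨a, mem_verts'.2 hx, rfl⟩
      · rintro ⟨a, ha, rfl⟩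
        exact ⟨mem_verts'.1 ha, a, rfl⟩
    rw [himg, Finset.sum_image (by intro a _ b _ h; simpa using h)]
    simp
  · -- higher-dimensional simplices
    rw [← Finset.sum_sigma (verts G) (fun v => sphere G {v})
      (fun p => Polynomial.C (((p.2.card : ℚ) + 1)⁻¹) * X ^ (p.2.card + 1))]
    rw [show (∑ x ∈ G.filter (fun x => ¬ x.card = 1), (X : Polynomial ℚ) ^ x.card)
        = ∑ x ∈ G.filter (fun x => ¬ x.card = 1), ∑ _v ∈ x,
            Polynomial.C ((x.card : ℚ))⁻¹ * X ^ x.card from ?_]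
    · rw [← Finset.sum_sigma (G.filter (fun x => ¬ x.card = 1)) (fun x => x)
        (fun p => Polynomial.C ((p.1.card : ℚ))⁻¹ * X ^ p.1.card)]
      refine Finset.sum_nbij' (fun p => ⟨p.2, p.1.erase p.2⟩)
        (fun p => ⟨insert p.1 p.2, p.1⟩) ?_ ?_ ?_ ?_ ?_
      · rintro ⟨x, v⟩ hp
        simp only [Finset.mem_sigma, mem_filter, id] at hp
        obtain ⟨⟨hxG, hx1⟩, hvx⟩ := hp
        have hvG : ({v} : Finset V) ∈ G :=
          (hG x hxG).2 _ (Finset.singleton_subset_iff.2 hvx) (Finset.singleton_nonempty v)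
        have hcard : 2 ≤ x.card := by
          have := Finset.card_pos.2 ⟨v, hvx⟩
          omega
        have herase : x.erase v ∈ G := by
          refine (hG x hxG).2 _ (Finset.erase_subset _ _) ?_
          rw [← Finset.card_pos, Finset.card_erase_of_mem hvx]; omega
        refine Finset.mem_sigma.2 ⟨mem_verts'.2 hvG, (mem_sphere_singleton hG).2
          ⟨herase, Finset.notMem_erase _ _, ?_⟩⟩
        rw [Finset.insert_erase hvx]; exact hxG
      · rintro ⟨v, y⟩ hp
        simp only [Finset.mem_sigma] at hp
        obtain ⟨hv, hy⟩ := hp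
        obtain ⟨hyG, hvy, hins⟩ := (mem_sphere_singleton hG).1 hy
        refine Finset.mem_sigma.2 ⟨mem_filter.2 ⟨hins, ?_⟩, Finset.mem_insert_self _ _⟩
        rw [Finset.card_insert_of_notMem hvy]
        have := Finset.card_pos.2 (hG y hyG).1
        omega
      · rintro ⟨x, v⟩ hp
        simp only [Finset.mem_sigma, mem_filter, id] at hp
        simp [Finset.insert_erase hp.2]
      · rintro ⟨v, y⟩ hp
        simp only [Finset.mem_sigma] at hp
        obtain ⟨hyG, hvy, hins⟩ := (mem_sphere_singleton hG).1 hp.2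
        simp [Finset.erase_insert hvy]
      · rintro ⟨x, v⟩ hp
        simp only [Finset.mem_sigma, mem_filter, id] at hp
        have hc : (x.erase v).card + 1 = x.card := by
          rw [Finset.card_erase_of_mem hp.2]
          have := Finset.card_pos.2 ⟨v, hp.2⟩
          omega
        simp only [← hc]
        push_cast
        ring
    · refine (Finset.sum_congr rfl fun x hx => ?_).symm
      obtain ⟨hxG, -⟩ := mem_filter.1 hx
      have h0 : (x.card : ℚ) ≠ 0 :=
        Nat.cast_ne_zero.2 (Finset.card_pos.2 (hG x hxG).1).ne'
      rw [Finset.sum_const, nsmul_eq_mul,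
        (Polynomial.C_eq_natCast (x.card : ℕ)).symm,
        ← mul_assoc, ← Polynomial.C_mul, mul_inv_cancel₀ h0, Polynomial.C_1, one_mul]


end SphereFormula
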